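/- For every m ≥ 1 and every (x,y,z) ∈ ℂ^3, all partial derivatives of order ≤ 2 with respect to a,b,c of the polynomial γ_m (the degree 2m-1 form in a,b,c obtained by regrouping, with coefficients in x,y,z) vanish at (a,b,c)=(x,y,z); i.e., the BMSS dual curve of degree 2m-1 has multiplicity at least 3 at the general point (x:y:z). -/
import Mathlib


open MvPolynomial

/-- The BMSS dual form of degree `2m-1`: `γ_m` viewed as a polynomial in the
variables `a,b,c` (indexed `0,1,2`), with `x,y,z` as parameters. -/
noncomputable def gammaMQ (m : ℕ) (x y z : ℂ) : MvPolynomial (Fin 3) ℂ :=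
  C (x * (z ^ (2 * m) - y ^ (2 * m))) * (X 0) ^ (2 * m - 1) +
  C (y * (x ^ (2 * m) - z ^ (2 * m))) * (X 1) ^ (2 * m - 1) +
  C (z * (y ^ (2 * m) - x ^ (2 * m))) * (X 2) ^ (2 * m - 1) +
  C (((2 * m - 1 : ℕ) : ℂ) * y * (x ^ m + z ^ m) * (y ^ m + z ^ m)) *
    ((X 0) ^ m * (X 1) ^ (m - 1)) -
  C (((2 * m - 1 : ℕ) : ℂ) * x * (x ^ m + z ^ m) * (y ^ m + z ^ m)) *
    ((X 0) ^ (m - 1) * (X 1) ^ m) -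
  C (((2 * m - 1 : ℕ) : ℂ) * z * (x ^ m + y ^ m) * (z ^ m + y ^ m)) *
    ((X 0) ^ m * (X 2) ^ (m - 1)) +
  C (((2 * m - 1 : ℕ) : ℂ) * x * (x ^ m + y ^ m) * (z ^ m + y ^ m)) *
    ((X 0) ^ (m - 1) * (X 2) ^ m) +
  C (((2 * m - 1 : ℕ) : ℂ) * z * (x ^ m + y ^ m) * (x ^ m + z ^ m)) *
    ((X 1) ^ m * (X 2) ^ (m - 1)) -
  C (((2 * m - 1 : ℕ) : ℂ) * y * (x ^ m + y ^ m) * (x ^ m + z ^ m)) *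
    ((X 1) ^ (m - 1) * (X 2) ^ m)

lemma pd2aux (i s t : Fin 3) (c : ℂ) (p q : ℕ) :
    pderiv i (C c * ((X s : MvPolynomial (Fin 3) ℂ) ^ p * X t ^ q)) =
      C (c * (if s = i then (p : ℂ) else 0)) * (X s ^ (p - 1) * X t ^ q) +
      C (c * (if t = i then (q : ℂ) else 0)) * (X s ^ p * X t ^ (q - 1)) := by
  rw [pderiv_C_mul, pderiv_mul, pderiv_pow, pderiv_pow, pderiv_X, pderiv_X]
  simp only [Pi.single_apply, smul_eq_mul, mul_ite, mul_zero, mul_one, map_mul]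
  split_ifs <;> simp [map_natCast] <;> ring

lemma pd1aux (i s : Fin 3) (c : ℂ) (p : ℕ) :
    pderiv i (C c * (X s : MvPolynomial (Fin 3) ℂ) ^ p) =
      C (c * (if s = i then (p : ℂ) else 0)) * (X s ^ (p - 1) * X s ^ 0) := by
  rw [pderiv_C_mul, pderiv_pow, pderiv_X]
  simp only [Pi.single_apply, smul_eq_mul, mul_ite, mul_zero, mul_one, map_mul]
  split_ifs <;> simp [map_natCast] <;> ring

lemma ev2aux (v : Fin 3 → ℂ) (s t : Fin 3) (c : ℂ) (p q : ℕ) :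
    eval v (C c * ((X s : MvPolynomial (Fin 3) ℂ) ^ p * X t ^ q)) = c * v s ^ p * v t ^ q := by
  simp [mul_assoc]

lemma ev1aux (v : Fin 3 → ℂ) (s : Fin 3) (c : ℂ) (p : ℕ) :
    eval v (C c * (X s : MvPolynomial (Fin 3) ℂ) ^ p) = c * v s ^ p := by
  simp

set_option maxHeartbeats 2000000 in
/-- For every `m ≥ 1`, all partials of order ≤ 2 of the BMSS dual form with
respect to `a,b,c` vanish at `(a,b,c) = (x,y,z)`: the dual curve of degree
`2m-1` has multiplicity ≥ 3 at `(x:y:z)`. -/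
theorem stmt19 (m : ℕ) (hm : 1 ≤ m) (x y z : ℂ) :
    eval ![x, y, z] (gammaMQ m x y z) = 0 ∧
    (∀ i : Fin 3, eval ![x, y, z] (pderiv i (gammaMQ m x y z)) = 0) ∧
    (∀ i j : Fin 3,
      eval ![x, y, z] (pderiv i (pderiv j (gammaMQ m x y z))) = 0) := by
  have hcases : m = 1 ∨ m = 2 ∨ 3 ≤ m := by omega
  rcases hcases with rfl | rfl | h3
  · refine ⟨?_, ?_, ?_⟩
    · simp only [gammaMQ, map_add, map_sub, eval_add, eval_sub, ev1aux, ev2aux,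
        Matrix.cons_val_zero, Matrix.cons_val_one, Matrix.head_cons, Matrix.cons_val_two,
        Matrix.tail_cons]
      norm_num [Fin.ext_iff]
      try ring
    · intro i; fin_cases i <;>
        (simp only [gammaMQ, map_add, map_sub, pd1aux, pd2aux, eval_add, eval_sub, ev1aux, ev2aux,
          Fin.isValue, Fin.reduceEq, if_true, if_false, reduceIte, mul_zero, zero_mul, map_zero,
          Matrix.cons_val_zero, Matrix.cons_val_one, Matrix.head_cons, Matrix.cons_val_two,
          Matrix.tail_cons]
         norm_num [Fin.ext_iff]
         try ring)
    · intro i j; fin_cases i <;> fin_cases j <;>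
        (simp only [gammaMQ, map_add, map_sub, pd1aux, pd2aux, eval_add, eval_sub, ev1aux, ev2aux,
          Fin.isValue, Fin.reduceEq, if_true, if_false, reduceIte, mul_zero, zero_mul, map_zero,
          Matrix.cons_val_zero, Matrix.cons_val_one, Matrix.head_cons, Matrix.cons_val_two,
          Matrix.tail_cons]
         norm_num [Fin.ext_iff]
         try ring)
  · refine ⟨?_, ?_, ?_⟩
    · simp only [gammaMQ, map_add, map_sub, eval_add, eval_sub, ev1aux, ev2aux,
        Matrix.cons_val_zero, Matrix.cons_val_one, Matrix.head_cons, Matrix.cons_val_two,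
        Matrix.tail_cons]
      norm_num [Fin.ext_iff]
      try ring
    · intro i; fin_cases i <;>
        (simp only [gammaMQ, map_add, map_sub, pd1aux, pd2aux, eval_add, eval_sub, ev1aux, ev2aux,
          Fin.isValue, Fin.reduceEq, if_true, if_false, reduceIte, mul_zero, zero_mul, map_zero,
          Matrix.cons_val_zero, Matrix.cons_val_one, Matrix.head_cons, Matrix.cons_val_two,
          Matrix.tail_cons]
         norm_num [Fin.ext_iff]
         try ring)
    · intro i j; fin_cases i <;> fin_cases j <;>
        (simp only [gammaMQ, map_add, map_sub, pd1aux, pd2aux, eval_add, eval_sub, ev1aux, ev2aux,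
          Fin.isValue, Fin.reduceEq, if_true, if_false, reduceIte, mul_zero, zero_mul, map_zero,
          Matrix.cons_val_zero, Matrix.cons_val_one, Matrix.head_cons, Matrix.cons_val_two,
          Matrix.tail_cons]
         norm_num [Fin.ext_iff]
         try ring)
  · obtain ⟨k, rfl⟩ : ∃ k, m = k + 3 := ⟨m - 3, by omega⟩
    refine ⟨?_, ?_, ?_⟩
    · simp only [gammaMQ, map_add, map_sub, eval_add, eval_sub, ev1aux, ev2aux,
        Matrix.cons_val_zero, Matrix.cons_val_one, Matrix.head_cons, Matrix.cons_val_two,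
        Matrix.tail_cons]
      simp only [show 2*(k+3)-1 = 2*k+5 from by omega, show 2*(k+3) = 2*k+6 from by omega,
        show k+3-1 = k+2 from by omega, show 2*k+5-1 = 2*k+4 from by omega,
        show 2*k+4-1 = 2*k+3 from by omega, show k+2-1 = k+1 from by omega,
        show k+1-1 = k from by omega, Nat.zero_sub, pow_zero, mul_one]
      push_cast
      ring
    · intro i; fin_cases i <;>
        (simp only [gammaMQ, map_add, map_sub, pd1aux, pd2aux, eval_add, eval_sub, ev1aux, ev2aux,
          Fin.isValue, Fin.reduceEq, if_true, if_false, reduceIte, mul_zero, zero_mul, map_zero,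
          Matrix.cons_val_zero, Matrix.cons_val_one, Matrix.head_cons, Matrix.cons_val_two,
          Matrix.tail_cons]
         simp only [show 2*(k+3)-1 = 2*k+5 from by omega, show 2*(k+3) = 2*k+6 from by omega,
           show k+3-1 = k+2 from by omega, show 2*k+5-1 = 2*k+4 from by omega,
           show 2*k+4-1 = 2*k+3 from by omega, show k+2-1 = k+1 from by omega,
           show k+1-1 = k from by omega, Nat.zero_sub, pow_zero, mul_one]
         push_cast
         ring)
    · intro i j; fin_cases i <;> fin_cases j <;>
        (simp only [gammaMQ, map_add, map_sub, pd1aux, pd2aux, eval_add, eval_sub, ev1aux, ev2aux,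
          Fin.isValue, Fin.reduceEq, if_true, if_false, reduceIte, mul_zero, zero_mul, map_zero,
          Matrix.cons_val_zero, Matrix.cons_val_one, Matrix.head_cons, Matrix.cons_val_two,
          Matrix.tail_cons]
         simp only [show 2*(k+3)-1 = 2*k+5 from by omega, show 2*(k+3) = 2*k+6 from by omega,
           show k+3-1 = k+2 from by omega, show 2*k+5-1 = 2*k+4 from by omega,
           show 2*k+4-1 = 2*k+3 from by omega, show k+2-1 = k+1 from by omega,
           show k+1-1 = k from by omega, Nat.zero_sub, pow_zero, mul_one]
         push_cast
         ring)
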